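/- (Existence of the Riemann integral of UC functions on rational intervals) Let u < v be real numbers and let f : [u,v]_ℚ → ℝ be uniformly continuous. Then there exists a real number L such that for every sequence (P_k) of tagged partitions of [u,v]_ℚ with Δ(P_k) → 0, the Riemann sums R(f, P_k) converge to L. -/

import Mathlib

open Filter Topology

/-- The rational interval [u,v]_ℚ = {a ∈ ℚ : u ≤ a ≤ v}. -/
def RatIcc (u v : ℝ) : Set ℚ := {a : ℚ | u ≤ (a : ℝ) ∧ (a : ℝ) ≤ v}

/-- Uniform continuity of f : M → ℝ for M ⊆ ℚ. -/
def UC (M : Set ℚ) (f : ℚ → ℝ) : Prop :=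
  ∀ ε : ℝ, 0 < ε → ∃ δ : ℝ, 0 < δ ∧
    ∀ a ∈ M, ∀ b ∈ M, |(a : ℝ) - (b : ℝ)| ≤ δ → |f a - f b| ≤ ε

/-- A tagged partition of [u,v]_ℚ: real partition points u = u₀ < u₁ < … < u_n = v
with rational tags b_i ∈ [u_{i−1}, u_i]_ℚ. -/
structure TaggedPartition (u v : ℝ) where
  n : ℕ
  pts : Fin (n + 1) → ℝ
  mono : StrictMono pts
  first : pts 0 = u
  last : pts (Fin.last n) = v
  tags : Fin n → ℚ
  tag_lb : ∀ i : Fin n, pts i.castSucc ≤ (tags i : ℝ)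
  tag_ub : ∀ i : Fin n, (tags i : ℝ) ≤ pts i.succ

/-- The norm Δ(P) of a tagged partition: the largest subinterval length. -/
noncomputable def TaggedPartition.norm {u v : ℝ} (P : TaggedPartition u v) : ℝ :=
  ⨆ i : Fin P.n, (P.pts i.succ - P.pts i.castSucc)

/-- The Riemann sum R(f, P). -/
noncomputable def TaggedPartition.riemannSum {u v : ℝ} (P : TaggedPartition u v)
    (f : ℚ → ℝ) : ℝ :=
  ∑ i : Fin P.n, f (P.tags i) * (P.pts i.succ - P.pts i.castSucc)

/-!
A UC function on the dense subset `[u,v]_ℚ` of `[u,v]` extends to a uniformly continuous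
function on `[u,v]`, hence (composing with the clamp `projIcc`) to a uniformly continuous
`G : ℝ → ℝ`. Every Riemann sum of `f` is a Riemann sum of `G`, and if `δ` is a modulus of
uniform continuity of `G` for `ε` and `Δ(P) ≤ δ`, then on each subinterval `G(bᵢ)(uᵢ - uᵢ₋₁)`
differs from `∫ G` by at most `ε (uᵢ - uᵢ₋₁)`. So the Riemann sums converge to `L = ∫_u^v G`.
-/

open Set MeasureTheory

theorem UC.uniformContinuousOn {M : Set ℚ} {f : ℚ → ℝ} (hf : UC M f) :
    UniformContinuousOn f M :=
  Metric.uniformContinuousOn_iff_le.2 fun ε hε => by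
    simpa only [Rat.dist_eq, Real.dist_eq] using hf ε hε

def ratIccToIcc (u v : ℝ) (a : RatIcc u v) : Icc u v := ⟨a, a.2⟩

theorem isUniformInducing_ratIccToIcc (u v : ℝ) : IsUniformInducing (ratIccToIcc u v) :=
  (IsUniformInducing.of_comp_iff (isUniformInducing_val _)).1
    (Rat.isUniformEmbedding_coe_real.isUniformInducing.comp (isUniformInducing_val _))

theorem denseRange_ratIccToIcc {u v : ℝ} (huv : u < v) : DenseRange (ratIccToIcc u v) := by
  have hIcc : Icc u v ⊆ closure (Ioo u v ∩ range ((↑) : ℚ → ℝ)) := by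
    rw [← closure_Ioo huv.ne]
    exact closure_minimal (Rat.denseRange_cast.open_subset_closure_inter isOpen_Ioo)
      isClosed_closure
  have hrat : Ioo u v ∩ range ((↑) : ℚ → ℝ) ⊆ (↑) '' range (ratIccToIcc u v) := by
    rintro _ ⟨hq, q, rfl⟩
    exact ⟨_, mem_range_self ⟨q, Ioo_subset_Icc_self hq⟩, rfl⟩
  rw [DenseRange, IsInducing.subtypeVal.dense_iff]
  exact fun x => closure_mono hrat (hIcc x.2)

theorem UC.exists_uniformContinuous_extension {u v : ℝ} (huv : u < v) {f : ℚ → ℝ}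
    (hf : UC (RatIcc u v) f) :
    ∃ G : ℝ → ℝ, UniformContinuous G ∧ ∀ a ∈ RatIcc u v, G a = f a := by
  have hfe : UniformContinuous ((RatIcc u v).domRestrict f) :=
    uniformContinuousOn_iff_restrict.1 hf.uniformContinuousOn
  have hui := isUniformInducing_ratIccToIcc u v
  have hdense := denseRange_ratIccToIcc huv
  refine ⟨(hui.isDenseInducing hdense).extend ((RatIcc u v).domRestrict f) ∘ projIcc u v huv.le,
    (uniformContinuous_uniformly_extend hui hdense hfe).comp
      (LipschitzWith.projIcc huv.le).uniformContinuous,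
    fun a ha => ?_⟩
  rw [Function.comp_apply, projIcc_of_mem huv.le ha]
  exact (hui.isDenseInducing hdense).extend_eq hfe.continuous ⟨a, ha⟩

theorem Fin.sum_succ_sub_castSucc {M : Type*} [AddCommGroup M] {n : ℕ} (a : Fin (n + 1) → M) :
    ∑ i : Fin n, (a i.succ - a i.castSucc) = a (Fin.last n) - a 0 := by
  induction n with
  | zero => simp
  | succ n ih =>
    have h := ih (a ∘ Fin.castSucc)
    simp only [Function.comp_apply, Fin.castSucc_zero] at h
    rw [Fin.sum_univ_castSucc]
    simp only [Fin.succ_castSucc, h, Fin.succ_last]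
    abel

theorem intervalIntegral.sum_integral_fin_adjacent {g : ℝ → ℝ} (hg : Continuous g) {n : ℕ}
    (a : Fin (n + 1) → ℝ) :
    ∑ i : Fin n, ∫ x in a i.castSucc..a i.succ, g x = ∫ x in a 0..a (Fin.last n), g x := by
  have hint : ∀ x y, IntervalIntegrable g volume x y := hg.intervalIntegrable
  calc ∑ i : Fin n, ∫ x in a i.castSucc..a i.succ, g x
      = ∑ i : Fin n, ((∫ x in a 0..a i.succ, g x) - ∫ x in a 0..a i.castSucc, g x) :=
        Finset.sum_congr rfl fun i _ =>
          (intervalIntegral.integral_interval_sub_left (hint _ _) (hint _ _)).symm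
    _ = ∫ x in a 0..a (Fin.last n), g x := by
        rw [Fin.sum_succ_sub_castSucc (fun i => ∫ x in a 0..a i, g x),
          intervalIntegral.integral_same, sub_zero]

theorem abs_mul_sub_integral_le {g : ℝ → ℝ} {a b c ε : ℝ} (hab : a ≤ b)
    (hg : IntervalIntegrable g volume a b) (hc : ∀ x ∈ Icc a b, |c - g x| ≤ ε) :
    |c * (b - a) - ∫ x in a..b, g x| ≤ ε * (b - a) := by
  have hconst : c * (b - a) = ∫ _ in a..b, c := by simp [mul_comm]
  rw [hconst, ← intervalIntegral.integral_sub intervalIntegrable_const hg]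
  have := intervalIntegral.norm_integral_le_of_norm_le_const (a := a) (b := b)
    (f := fun x => c - g x) (C := ε) fun x hx => by
      rw [uIoc_of_le hab] at hx
      exact hc x (Ioc_subset_Icc_self hx)
  rwa [Real.norm_eq_abs, abs_of_nonneg (sub_nonneg.2 hab)] at this

namespace TaggedPartition

variable {u v : ℝ} (P : TaggedPartition u v)

theorem tags_mem (i : Fin P.n) : P.tags i ∈ RatIcc u v :=
  ⟨P.first.ge.trans <| (P.mono.monotone (Fin.zero_le _)).trans (P.tag_lb i),
    (P.tag_ub i).trans <| (P.mono.monotone (Fin.le_last _)).trans P.last.le⟩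

theorem sub_le_norm (i : Fin P.n) : P.pts i.succ - P.pts i.castSucc ≤ P.norm :=
  le_ciSup (f := fun j : Fin P.n => P.pts j.succ - P.pts j.castSucc) (finite_range _).bddAbove i

theorem riemannSum_congr {f g : ℚ → ℝ} (hfg : EqOn f g (RatIcc u v)) :
    P.riemannSum f = P.riemannSum g :=
  Finset.sum_congr rfl fun i _ => by rw [hfg (P.tags_mem i)]

theorem abs_riemannSum_sub_integral_le {G : ℝ → ℝ} (hG : Continuous G) {ε δ : ℝ}
    (hGδ : ∀ ⦃x y⦄, dist x y ≤ δ → dist (G x) (G y) ≤ ε) (hP : P.norm ≤ δ) :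
    |P.riemannSum (fun q => G q) - ∫ x in u..v, G x| ≤ ε * (v - u) := by
  have hsplit := intervalIntegral.sum_integral_fin_adjacent hG P.pts
  rw [P.first, P.last] at hsplit
  have hlen := Fin.sum_succ_sub_castSucc P.pts
  rw [P.first, P.last] at hlen
  rw [← hsplit, ← hlen, Finset.mul_sum, TaggedPartition.riemannSum, ← Finset.sum_sub_distrib]
  refine (Finset.abs_sum_le_sum_abs _ _).trans (Finset.sum_le_sum fun i _ => ?_)
  refine abs_mul_sub_integral_le (P.mono i.castSucc_lt_succ).le (hG.intervalIntegrable _ _)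
    fun x hx => ?_
  rw [← Real.dist_eq]
  refine hGδ ((Real.dist_le_of_mem_Icc ⟨P.tag_lb i, P.tag_ub i⟩ hx).trans ?_)
  exact (P.sub_le_norm i).trans hP

end TaggedPartition

theorem tendsto_riemannSum_integral {u v : ℝ} (huv : u < v) {G : ℝ → ℝ}
    (hG : UniformContinuous G) {P : ℕ → TaggedPartition u v}
    (hP : Tendsto (fun k => (P k).norm) atTop (𝓝 0)) :
    Tendsto (fun k => (P k).riemannSum (fun q => G q)) atTop (𝓝 (∫ x in u..v, G x)) := by
  refine Metric.nhds_basis_closedBall.tendsto_right_iff.2 fun ε hε => ?_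
  obtain ⟨δ, hδ, hGδ⟩ :=
    Metric.uniformContinuous_iff_le.1 hG (ε / (v - u)) (div_pos hε (sub_pos.2 huv))
  filter_upwards [hP.eventually (eventually_le_nhds hδ)] with k hk
  rw [Metric.mem_closedBall, Real.dist_eq]
  calc _ ≤ ε / (v - u) * (v - u) :=
        (P k).abs_riemannSum_sub_integral_le hG.continuous hGδ hk
    _ = ε := div_mul_cancel₀ _ (sub_ne_zero.2 huv.ne')

/-- Existence of the Riemann integral of a UC function on a rational interval: there
is L such that every sequence of tagged partitions with norms tending to 0 has
Riemann sums tending to L. -/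
theorem riemann_integral_exists (u v : ℝ) (huv : u < v) (f : ℚ → ℝ)
    (hf : UC (RatIcc u v) f) :
    ∃ L : ℝ, ∀ P : ℕ → TaggedPartition u v,
      Tendsto (fun k => (P k).norm) atTop (𝓝 0) →
      Tendsto (fun k => (P k).riemannSum f) atTop (𝓝 L) := by
  obtain ⟨G, hG, hGf⟩ := hf.exists_uniformContinuous_extension huv
  refine ⟨∫ x in u..v, G x, fun P hP => ?_⟩
  simpa only [fun k => (P k).riemannSum_congr hGf] using tendsto_riemannSum_integral huv hG hP
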